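/- Let Ω ∈ (0,1) be a quadratic irrational whose continued fraction is purely m-periodic, with associated matrices T, U and eigenvalue λ > 1. Then a quasi-resonance k ∈ A is primitive (i.e. U⁻¹k ∉ A) if and only if 1/(2λ) < |⟨k,ω⟩| < 1/2. -/

import Mathlib

open Real Filter Matrix

noncomputable section

/-- Orbit of the Gauss map `g(x) = {1/x}` starting at `Ω`:
`x₀ = Ω`, `x_{j+1} = g(x_j)`. -/
def gaussOrbit (Ω : ℝ) : ℕ → ℝ
  | 0 => Ω
  | j + 1 => Int.fract (1 / gaussOrbit Ω j)

/-- `cfA Ω j` is the partial quotient `a_{j+1}` of the continued fraction of `Ω`. -/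
def cfA (Ω : ℝ) (j : ℕ) : ℤ := ⌊1 / gaussOrbit Ω j⌋

/-- The matrix `[[a, 1], [1, 0]]`. -/
def Acf (a : ℤ) : Matrix (Fin 2) (Fin 2) ℤ := !![a, 1; 1, 0]

/-- The product `A₁ ⋯ A_m` with `A_i = [[a_i, 1], [1, 0]]`. -/
def cfMatProd (Ω : ℝ) (m : ℕ) : Matrix (Fin 2) (Fin 2) ℤ :=
  ((List.range m).map fun i => Acf (cfA Ω i)).prod

/-- `cfQ Ω (j+1) = q_j`:  `q₋₁ = 0`, `q₀ = 1`, `q_j = a_j q_{j-1} + q_{j-2}`. -/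
def cfQ (Ω : ℝ) : ℕ → ℤ
  | 0 => 0
  | 1 => 1
  | j + 2 => cfA Ω j * cfQ Ω (j + 1) + cfQ Ω j

/-- `cfP Ω (j+1) = p_j`:  `p₋₁ = 1`, `p₀ = 0`, `p_j = a_j p_{j-1} + p_{j-2}`. -/
def cfP (Ω : ℝ) : ℕ → ℤ
  | 0 => 1
  | 1 => 0
  | j + 2 => cfA Ω j * cfP Ω (j + 1) + cfP Ω j

/-- The vector convergent `w(j) = (q_j, p_j)`. -/
def wconv (Ω : ℝ) (j : ℕ) : Fin 2 → ℤ := ![cfQ Ω (j + 1), cfP Ω (j + 1)]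

/-- The resonant convergent `v(j) = (−p_j, q_j)`. -/
def vconv (Ω : ℝ) (j : ℕ) : Fin 2 → ℤ := ![-cfP Ω (j + 1), cfQ Ω (j + 1)]

/-- A quadratic irrational number. -/
def IsQuadraticIrrational (Ω : ℝ) : Prop :=
  Irrational Ω ∧ ∃ A B C : ℤ, A ≠ 0 ∧ (A : ℝ) * Ω ^ 2 + (B : ℝ) * Ω + (C : ℝ) = 0

end
noncomputable section

/-- `⟨k, ω⟩ = k₁ + k₂ Ω` for `ω = (1, Ω)`. -/
def pairω (Ω : ℝ) (k : Fin 2 → ℤ) : ℝ := (k 0 : ℝ) + (k 1 : ℝ) * Ω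

/-- `|k|₁ = |k₁| + |k₂|`. -/
def norm1 (k : Fin 2 → ℤ) : ℤ := |k 0| + |k 1|

/-- `p⁰(q)`: the integer nearest to `qΩ`. -/
def p0 (Ω : ℝ) (q : ℤ) : ℤ := round ((q : ℝ) * Ω)

/-- `k⁰(q) = (−p⁰(q), q)`. -/
def kzero (Ω : ℝ) (q : ℤ) : Fin 2 → ℤ := ![-p0 Ω q, q]

/-- The set `A` of quasi-resonances: vectors `k⁰(q)`, `q ≥ 1`, with `|⟨k,ω⟩| < 1/2`. -/
def inA (Ω : ℝ) (k : Fin 2 → ℤ) : Prop :=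
  ∃ q : ℤ, 1 ≤ q ∧ k = kzero Ω q ∧ |pairω Ω k| < 1 / 2

/-- A quasi-resonance `k` is primitive if `U⁻¹k` is not a quasi-resonance. -/
def PrimitiveVec (Ω : ℝ) (U : Matrix (Fin 2) (Fin 2) ℤ) (k : Fin 2 → ℤ) : Prop :=
  inA Ω k ∧ ¬inA Ω (U⁻¹.mulVec k)

/-- A primitive integer `q ≥ 1`. -/
def PrimitiveInt (Ω : ℝ) (U : Matrix (Fin 2) (Fin 2) ℤ) (q : ℤ) : Prop :=
  1 ≤ q ∧ PrimitiveVec Ω U (kzero Ω q)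

/-- The resonant sequence `s(q, n) = Uⁿ k⁰(q)`. -/
def sres (Ω : ℝ) (U : Matrix (Fin 2) (Fin 2) ℤ) (q : ℤ) (n : ℕ) : Fin 2 → ℤ :=
  (U ^ n).mulVec (kzero Ω q)

/-- `U = σ (T⁻¹)ᵀ` with `σ = det T = (−1)^m` and `T = A₁⋯A_m`. -/
def Umat (Ω : ℝ) (m : ℕ) : Matrix (Fin 2) (Fin 2) ℤ :=
  ((-1 : ℤ) ^ m) • ((cfMatProd Ω m)⁻¹)ᵀ

/-- The numerator `γ_k = |⟨k,ω⟩| · |k|₁`. -/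
def gammaK (Ω : ℝ) (k : Fin 2 → ℤ) : ℝ := |pairω Ω k| * (norm1 k : ℝ)

/-- `K_q = |z_q|(1+Ω)/|c+bΩ²|`, where `z_q = cq + bpΩ`, `p = p⁰(q)`,
and `b, c` are the off-diagonal entries of `T = A₁⋯A_m = [[a,b],[c,d]]`. -/
def KqD (Ω : ℝ) (m : ℕ) (q : ℤ) : ℝ :=
  |(cfMatProd Ω m 1 0 : ℝ) * (q : ℝ) + (cfMatProd Ω m 0 1 : ℝ) * (p0 Ω q : ℝ) * Ω| * (1 + Ω) /
    |(cfMatProd Ω m 1 0 : ℝ) + (cfMatProd Ω m 0 1 : ℝ) * Ω ^ 2|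

/-- The limit numerator `γ*_q = |r_q| K_q` with `r_q = qΩ − p⁰(q)`. -/
def gammaStarQ (Ω : ℝ) (m : ℕ) (q : ℤ) : ℝ :=
  |(q : ℝ) * Ω - (p0 Ω q : ℝ)| * KqD Ω m q

end

/-!
Since `U⁻¹ = σ Tᵀ` and `(1, Ω)` is an eigenvector of `T`, `⟨U⁻¹k, ω⟩ = σλ⟨k, ω⟩`; so
`U⁻¹k ∈ A` forces `λ|⟨k, ω⟩| < 1/2`, and equality `λ|⟨k, ω⟩| = 1/2` is excluded by irrationality.
Conversely, `A` consists exactly of the `k` with `k₂ ≥ 1` and `|⟨k, ω⟩| < 1/2`, and if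
`λ|⟨k, ω⟩| < 1/2` then `λ (U⁻¹k)₂ = k₂ + σλb⟨k, ω⟩` with `0 ≤ b = q_{m-1} ≤ λ`, which makes
`(U⁻¹k)₂` positive.
-/

theorem inv_smul_transpose_nonsing_inv {n R : Type*} [Fintype n] [DecidableEq n] [CommRing R]
    {M : Matrix n n R} {σ : R} (hdet : M.det = σ) (hσ : σ * σ = 1) :
    (σ • M⁻¹ᵀ)⁻¹ = σ • Mᵀ := by
  apply inv_eq_right_inv
  rw [smul_mul_smul_comm, hσ, one_smul, ← transpose_mul,
    mul_nonsing_inv M (hdet ▸ IsUnit.of_mul_eq_one _ hσ), transpose_one]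

section Pairing

variable {Ω : ℝ}

theorem pairω_smul (c : ℤ) (k : Fin 2 → ℤ) : pairω Ω (c • k) = c * pairω Ω k := by
  simp only [pairω, Pi.smul_apply, smul_eq_mul, Int.cast_mul]
  ring

theorem irrational_pairω (hΩ : Irrational Ω) {k : Fin 2 → ℤ} (hk : k 1 ≠ 0) :
    Irrational (pairω Ω k) :=
  (hΩ.intCast_mul hk).intCast_add _

theorem pairω_eq_zero_of_abs_lt_half {k : Fin 2 → ℤ} (hk : k 1 = 0)
    (hlt : |pairω Ω k| < 1 / 2) : pairω Ω k = 0 := by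
  have hpair : pairω Ω k = k 0 := by simp [pairω, hk]
  rw [hpair] at hlt ⊢
  have : |k 0| < 1 := by
    rw [← Int.cast_lt (R := ℝ), Int.cast_abs, Int.cast_one]
    linarith
  simp [Int.abs_lt_one_iff.mp this]

theorem abs_pairω_ne_half (hΩ : Irrational Ω) (k : Fin 2 → ℤ) : |pairω Ω k| ≠ 1 / 2 := by
  intro h
  by_cases hk : k 1 = 0
  · have h2 : ((2 * |k 0| : ℤ) : ℝ) = (1 : ℤ) := by
      simp only [pairω, hk, Int.cast_zero, zero_mul, add_zero] at h
      push_cast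
      linarith
    have := Int.cast_injective h2
    omega
  · obtain h | h := abs_eq (by norm_num : (0 : ℝ) ≤ 1 / 2) |>.mp h
    · exact irrational_pairω hΩ hk ⟨1 / 2, by rw [h]; norm_num⟩
    · exact irrational_pairω hΩ hk ⟨-(1 / 2), by rw [h]; norm_num⟩

/-- If `|⟨k,ω⟩| < 1/2` then `-k₁` is the integer nearest to `k₂Ω`, so `k = k⁰(k₂)`. -/
theorem inA_iff {k : Fin 2 → ℤ} : inA Ω k ↔ 1 ≤ k 1 ∧ |pairω Ω k| < 1 / 2 := by
  constructor
  · rintro ⟨q, hq, rfl, hlt⟩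
    exact ⟨hq, hlt⟩
  · rintro ⟨hk, hlt⟩
    refine ⟨k 1, hk, ?_, hlt⟩
    have hround : p0 Ω (k 1) = -k 0 := by
      rw [p0, round_eq_iff]
      rw [pairω, abs_lt] at hlt
      push_cast
      constructor <;> linarith
    ext i
    fin_cases i <;> simp [kzero, hround]

end Pairing

section Renormalization

variable {Ω lam : ℝ} {T : Matrix (Fin 2) (Fin 2) ℤ}

theorem mulVec_eq_smul_row_zero (hT : (T.map fun z : ℤ => (z : ℝ)) *ᵥ ![1, Ω] = lam • ![1, Ω]) :
    (T 0 0 : ℝ) + T 0 1 * Ω = lam := by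
  simpa [mulVec, dotProduct, Fin.sum_univ_two] using congrFun hT 0

theorem mulVec_eq_smul_row_one (hT : (T.map fun z : ℤ => (z : ℝ)) *ᵥ ![1, Ω] = lam • ![1, Ω]) :
    (T 1 0 : ℝ) + T 1 1 * Ω = lam * Ω := by
  simpa [mulVec, dotProduct, Fin.sum_univ_two] using congrFun hT 1

theorem pairω_transpose_mulVec (hT : (T.map fun z : ℤ => (z : ℝ)) *ᵥ ![1, Ω] = lam • ![1, Ω])
    (k : Fin 2 → ℤ) : pairω Ω (Tᵀ *ᵥ k) = lam * pairω Ω k := by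
  simp only [pairω, mulVec, dotProduct, Fin.sum_univ_two, transpose_apply]
  push_cast
  linear_combination (k 0 : ℝ) * mulVec_eq_smul_row_zero hT + (k 1 : ℝ) * mulVec_eq_smul_row_one hT

theorem mul_transpose_mulVec_apply_one
    (hT : (T.map fun z : ℤ => (z : ℝ)) *ᵥ ![1, Ω] = lam • ![1, Ω]) (k : Fin 2 → ℤ) :
    lam * ((Tᵀ *ᵥ k) 1 : ℝ) = T.det * k 1 + lam * T 0 1 * pairω Ω k := by
  simp only [pairω, mulVec, dotProduct, Fin.sum_univ_two, transpose_apply, det_fin_two]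
  push_cast
  linear_combination ((k 1 : ℝ) * T 0 1) * mulVec_eq_smul_row_one hT -
    ((k 1 : ℝ) * T 1 1) * mulVec_eq_smul_row_zero hT

theorem abs_det_eq_one (hdet : T.det * T.det = 1) : |(T.det : ℝ)| = 1 := by
  rw [← Int.cast_abs, Int.isUnit_iff_abs_eq.mp (IsUnit.of_mul_eq_one _ hdet), Int.cast_one]

theorem abs_pairω_det_smul_transpose_mulVec
    (hT : (T.map fun z : ℤ => (z : ℝ)) *ᵥ ![1, Ω] = lam • ![1, Ω]) (hdet : T.det * T.det = 1)
    (hlam : 0 < lam) (k : Fin 2 → ℤ) :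
    |pairω Ω ((T.det • Tᵀ) *ᵥ k)| = lam * |pairω Ω k| := by
  rw [smul_mulVec, pairω_smul, pairω_transpose_mulVec hT, abs_mul, abs_mul, abs_det_eq_one hdet,
    abs_of_pos hlam, one_mul]

theorem one_le_det_smul_transpose_mulVec_apply_one (hΩ : Irrational Ω)
    (hT : (T.map fun z : ℤ => (z : ℝ)) *ᵥ ![1, Ω] = lam • ![1, Ω]) (hdet : T.det * T.det = 1)
    (hlam : 1 < lam) (hb0 : 0 ≤ T 0 1) (hblam : (T 0 1 : ℝ) ≤ lam) {k : Fin 2 → ℤ}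
    (hk : inA Ω k) (hsmall : lam * |pairω Ω k| < 1 / 2) : 1 ≤ ((T.det • Tᵀ) *ᵥ k) 1 := by
  set k' := (T.det • Tᵀ) *ᵥ k with hk'
  obtain ⟨hk1, -⟩ := inA_iff.mp hk
  have hσ : (T.det : ℝ) * T.det = 1 := by exact_mod_cast hdet
  have hk'1 : lam * (k' 1 : ℝ) = k 1 + T.det * lam * T 0 1 * pairω Ω k := by
    simp only [hk', smul_mulVec, Pi.smul_apply, smul_eq_mul, Int.cast_mul]
    linear_combination (T.det : ℝ) * mul_transpose_mulVec_apply_one hT k + (k 1 : ℝ) * hσ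
  have hcorr : |(T.det : ℝ) * lam * T 0 1 * pairω Ω k| ≤ lam / 2 := by
    have hb0' : (0 : ℝ) ≤ T 0 1 := by exact_mod_cast hb0
    rw [abs_mul, abs_mul, abs_mul, abs_det_eq_one hdet, abs_of_pos (by linarith : 0 < lam),
      abs_of_nonneg hb0']
    nlinarith [mul_le_mul_of_nonneg_left hsmall.le hb0']
  have hnonneg : 0 ≤ k' 1 := by
    have : (-1 : ℝ) < k' 1 := by
      by_contra! h
      have : (k 1 : ℝ) ≥ 1 := by exact_mod_cast hk1
      nlinarith [neg_abs_le ((T.det : ℝ) * lam * T 0 1 * pairω Ω k)]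
    have : (-1 : ℤ) < k' 1 := by exact_mod_cast this
    omega
  -- If `k'₂ = 0` then `⟨k', ω⟩ = k'₁` is an integer of absolute value `< 1/2`.
  have hne : k' 1 ≠ 0 := by
    intro hzero
    have hk'0 := pairω_eq_zero_of_abs_lt_half hzero
      (by rwa [abs_pairω_det_smul_transpose_mulVec hT hdet (by linarith)])
    have hk0 : pairω Ω k = 0 := by
      have := abs_pairω_det_smul_transpose_mulVec hT hdet (by linarith) k
      rw [hk'0, abs_zero] at this
      exact abs_eq_zero.mp ((mul_eq_zero.mp this.symm).resolve_left (by linarith))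
    exact (irrational_pairω hΩ (by omega : k 1 ≠ 0)).ne_zero hk0
  omega

theorem not_inA_det_smul_transpose_mulVec_iff (hΩ : Irrational Ω)
    (hT : (T.map fun z : ℤ => (z : ℝ)) *ᵥ ![1, Ω] = lam • ![1, Ω]) (hdet : T.det * T.det = 1)
    (hlam : 1 < lam) (hb0 : 0 ≤ T 0 1) (hblam : (T 0 1 : ℝ) ≤ lam) {k : Fin 2 → ℤ}
    (hk : inA Ω k) : ¬inA Ω ((T.det • Tᵀ) *ᵥ k) ↔ 1 / (2 * lam) < |pairω Ω k| := by
  have habs := abs_pairω_det_smul_transpose_mulVec hT hdet (by linarith) k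
  have hne : lam * |pairω Ω k| ≠ 1 / 2 := habs ▸ abs_pairω_ne_half hΩ _
  have hscale : 1 / (2 * lam) < |pairω Ω k| ↔ 1 / 2 < lam * |pairω Ω k| := by
    rw [div_lt_iff₀ (by linarith)]
    constructor <;> intro h <;> linarith
  rw [inA_iff, habs, hscale]
  constructor
  · intro h
    by_contra! hle
    have hsmall := lt_of_le_of_ne hle hne
    exact h ⟨one_le_det_smul_transpose_mulVec_apply_one hΩ hT hdet hlam hb0 hblam hk hsmall,
      hsmall⟩
  · rintro h ⟨-, h'⟩
    linarith

end Renormalization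

section ContinuedFraction

variable {Ω : ℝ}

theorem irrational_gaussOrbit (hΩ : Irrational Ω) : ∀ j, Irrational (gaussOrbit Ω j)
  | 0 => hΩ
  | j + 1 => by
    rw [gaussOrbit, Int.fract, one_div]
    exact (irrational_gaussOrbit hΩ j).inv.sub_intCast _

theorem gaussOrbit_mem_Ioo (hΩ : Irrational Ω) (h0 : 0 < Ω) (h1 : Ω < 1) :
    ∀ j, gaussOrbit Ω j ∈ Set.Ioo 0 1
  | 0 => ⟨h0, h1⟩
  | j + 1 =>
    ⟨(Int.fract_nonneg _).lt_of_ne' (irrational_gaussOrbit hΩ (j + 1)).ne_zero,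
      Int.fract_lt_one _⟩

theorem one_le_cfA (hΩ : Irrational Ω) (h0 : 0 < Ω) (h1 : Ω < 1) (j : ℕ) : 1 ≤ cfA Ω j := by
  obtain ⟨hpos, hlt⟩ := gaussOrbit_mem_Ioo hΩ h0 h1 j
  rw [cfA, Int.le_floor, Int.cast_one, le_div_iff₀ hpos]
  linarith

theorem cfQ_nonneg (ha : ∀ j, 0 ≤ cfA Ω j) : ∀ n, 0 ≤ cfQ Ω n
  | 0 => le_rfl
  | 1 => zero_le_one
  | n + 2 => by
    have := cfQ_nonneg ha n
    have := cfQ_nonneg ha (n + 1)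
    have := ha n
    rw [cfQ]
    positivity

theorem cfQ_le_cfQ_succ (ha : ∀ j, 1 ≤ cfA Ω j) : ∀ n, cfQ Ω n ≤ cfQ Ω (n + 1)
  | 0 => zero_le_one
  | n + 1 => by
    have hq := cfQ_nonneg (fun j => zero_le_one.trans (ha j))
    show cfQ Ω (n + 1) ≤ cfA Ω n * cfQ Ω (n + 1) + cfQ Ω n
    nlinarith [ha n, hq n, hq (n + 1)]

theorem cfMatProd_succ (n : ℕ) : cfMatProd Ω (n + 1) = cfMatProd Ω n * Acf (cfA Ω n) := by
  simp [cfMatProd, List.range_succ]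

theorem cfMatProd_eq (n : ℕ) :
    cfMatProd Ω n = !![cfQ Ω (n + 1), cfQ Ω n; cfP Ω (n + 1), cfP Ω n] := by
  induction n with
  | zero => simp [cfMatProd, cfQ, cfP, one_fin_two]
  | succ n ih =>
    rw [cfMatProd_succ, ih, Acf, cfQ, cfP]
    ext i j
    fin_cases i <;> fin_cases j <;> simp [Matrix.mul_apply, Fin.sum_univ_two] <;> ring

theorem det_cfMatProd (n : ℕ) : (cfMatProd Ω n).det = (-1) ^ n := by
  induction n with
  | zero => simp [cfMatProd]
  | succ n ih => rw [cfMatProd_succ, det_mul, ih, Acf, det_fin_two_of, pow_succ]; ring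

end ContinuedFraction

theorem splitting_quadratic_stmt6_general
    (Ω : ℝ) (m : ℕ) (h0 : 0 < Ω) (h1 : Ω < 1)
    (hquad : IsQuadraticIrrational Ω)
    (lam : ℝ) (hlam : 1 < lam)
    (heig : ((cfMatProd Ω m).map fun z : ℤ => (z : ℝ)).mulVec ![1, Ω] = lam • ![1, Ω]) :
    ∀ k : Fin 2 → ℤ, inA Ω k →
      (PrimitiveVec Ω (Umat Ω m) k ↔
        (1 / (2 * lam) < |pairω Ω k| ∧ |pairω Ω k| < 1 / 2)) := by
  intro k hk
  have hΩ := hquad.1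
  have ha := one_le_cfA hΩ h0 h1
  have hdet : (cfMatProd Ω m).det * (cfMatProd Ω m).det = 1 := by
    rw [det_cfMatProd, ← mul_pow]; norm_num
  have hUinv : (Umat Ω m)⁻¹ = (cfMatProd Ω m).det • (cfMatProd Ω m)ᵀ := by
    rw [Umat, ← det_cfMatProd (Ω := Ω) m]
    exact inv_smul_transpose_nonsing_inv rfl hdet
  have hb0 : 0 ≤ cfMatProd Ω m 0 1 := by
    simpa [cfMatProd_eq] using cfQ_nonneg (fun j => zero_le_one.trans (ha j)) m
  have hba : cfMatProd Ω m 0 1 ≤ cfMatProd Ω m 0 0 := by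
    simpa [cfMatProd_eq] using cfQ_le_cfQ_succ ha m
  have hblam : (cfMatProd Ω m 0 1 : ℝ) ≤ lam := by
    have : (0 : ℝ) ≤ cfMatProd Ω m 0 1 := by exact_mod_cast hb0
    have : (cfMatProd Ω m 0 1 : ℝ) ≤ cfMatProd Ω m 0 0 := by exact_mod_cast hba
    nlinarith [mulVec_eq_smul_row_zero heig]
  rw [PrimitiveVec, hUinv, not_inA_det_smul_transpose_mulVec_iff hΩ heig hdet hlam hb0 hblam hk]
  exact ⟨fun h => ⟨h.2, (inA_iff.mp hk).2⟩, fun h => ⟨hk, h.1⟩⟩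

/-- The fundamental property of primitive vectors: a quasi-resonance `k ∈ A` is
primitive (i.e. `U⁻¹k ∉ A`) if and only if `1/(2λ) < |⟨k,ω⟩| < 1/2`. -/
theorem splitting_quadratic_stmt6
    (Ω : ℝ) (m : ℕ) (hm : 1 ≤ m) (h0 : 0 < Ω) (h1 : Ω < 1)
    (hquad : IsQuadraticIrrational Ω)
    (hper : gaussOrbit Ω m = Ω)
    (lam : ℝ) (hlam : 1 < lam)
    (heig : ((cfMatProd Ω m).map fun z : ℤ => (z : ℝ)).mulVec ![1, Ω] = lam • ![1, Ω]) :
    ∀ k : Fin 2 → ℤ, inA Ω k →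
      (PrimitiveVec Ω (Umat Ω m) k ↔
        (1 / (2 * lam) < |pairω Ω k| ∧ |pairω Ω k| < 1 / 2)) :=
  splitting_quadratic_stmt6_general Ω m h0 h1 hquad lam hlam heig
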